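/- arXiv:1601.00142 — 4 statements merged into one kernel-verified Lean document; each statement's English description precedes it below -/
import Mathlib

section
/- Let A be a real p×p positive semidefinite matrix with spectral decomposition A = UΛUᵀ where Λ = diag(λ₁,…,λ_p). If Ax = 0, then the subdifferential of f(y) = sqrt(yᵀAy) at x equals the set {UΛ^{1/2} y : ‖y‖ ≤ 1}, i.e., the image of the closed unit Euclidean ball under the map UΛ^{1/2}. -/
open scoped Matrix

open Matrix

lemma dotCS {p : ℕ} (a b : Fin p → ℝ) :
    a ⬝ᵥ b ≤ Real.sqrt (a ⬝ᵥ a) * Real.sqrt (b ⬝ᵥ b) := by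
  have h := real_inner_le_norm (F := EuclideanSpace ℝ (Fin p))
    ((WithLp.equiv 2 _).symm a) ((WithLp.equiv 2 _).symm b)
  rw [EuclideanSpace.norm_eq, EuclideanSpace.norm_eq] at h
  simp only [PiLp.inner_apply, RCLike.inner_apply, conj_trivial,
    WithLp.equiv_symm_apply, PiLp.toLp_apply, Real.norm_eq_abs, sq_abs] at h
  simpa [dotProduct, pow_two, mul_comm] using h

/-- If `A = U Λ Uᵀ` is positive semidefinite with `U` orthogonal, `Λ = diag (λ₁, …, λ_p)`,
and `A x = 0`, then the subdifferential of `y ↦ sqrt (yᵀ A y)` at `x` is the image of the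
closed unit Euclidean ball under `U Λ^{1/2}`. -/
theorem subdifferential_sqrt_quadForm_eq_image {p : ℕ}
    (A U : Matrix (Fin p) (Fin p) ℝ) (Λ : Fin p → ℝ) (hΛ : ∀ j, 0 ≤ Λ j)
    (hU1 : U * Uᵀ = 1) (hU2 : Uᵀ * U = 1)
    (hAeq : A = U * Matrix.diagonal Λ * Uᵀ) (hA : A.PosSemidef)
    (x : Fin p → ℝ) (hx : A.mulVec x = 0) :
    {v : Fin p → ℝ | ∀ y : Fin p → ℝ,
        Real.sqrt (x ⬝ᵥ A.mulVec x) + (y - x) ⬝ᵥ v ≤ Real.sqrt (y ⬝ᵥ A.mulVec y)} =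
      (fun y : Fin p → ℝ =>
        (U * Matrix.diagonal fun j => Real.sqrt (Λ j)).mulVec y) ''
        {y : Fin p → ℝ | Real.sqrt (y ⬝ᵥ y) ≤ 1} := by
  classical
  set Dh : Matrix (Fin p) (Fin p) ℝ := Matrix.diagonal fun j => Real.sqrt (Λ j) with hDh
  -- quadratic form formula
  have hform : ∀ y : Fin p → ℝ,
      y ⬝ᵥ A.mulVec y = ∑ j, Λ j * (Uᵀ.mulVec y j * Uᵀ.mulVec y j) := by
    intro y
    rw [hAeq, Matrix.mul_assoc, ← Matrix.mulVec_mulVec, Matrix.dotProduct_mulVec,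
      ← Matrix.mulVec_transpose, ← Matrix.mulVec_mulVec]
    simp [dotProduct, Matrix.mulVec_diagonal]
    exact Finset.sum_congr rfl fun j _ => by ring
  -- x ⬝ A x = 0
  have hx0 : x ⬝ᵥ A.mulVec x = 0 := by rw [hx, dotProduct_zero]
  -- each term vanishes : sqrt (Λ j) * (Uᵀ x) j = 0
  have hterm : ∀ j, Real.sqrt (Λ j) * Uᵀ.mulVec x j = 0 := by
    have hsum : ∑ j, Λ j * (Uᵀ.mulVec x j * Uᵀ.mulVec x j) = 0 := by
      rw [← hform, hx0]
    have hnn : ∀ j ∈ Finset.univ, (0:ℝ) ≤ Λ j * (Uᵀ.mulVec x j * Uᵀ.mulVec x j) :=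
      fun j _ => mul_nonneg (hΛ j) (mul_self_nonneg _)
    intro j
    have hj : Λ j * (Uᵀ.mulVec x j * Uᵀ.mulVec x j) = 0 :=
      (Finset.sum_eq_zero_iff_of_nonneg hnn).mp hsum j (Finset.mem_univ j)
    have h2 : (Real.sqrt (Λ j) * Uᵀ.mulVec x j) * (Real.sqrt (Λ j) * Uᵀ.mulVec x j) = 0 := by
      have : Real.sqrt (Λ j) * Real.sqrt (Λ j) = Λ j := Real.mul_self_sqrt (hΛ j)
      calc (Real.sqrt (Λ j) * Uᵀ.mulVec x j) * (Real.sqrt (Λ j) * Uᵀ.mulVec x j)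
          = (Real.sqrt (Λ j) * Real.sqrt (Λ j)) * (Uᵀ.mulVec x j * Uᵀ.mulVec x j) := by ring
        _ = Λ j * (Uᵀ.mulVec x j * Uᵀ.mulVec x j) := by rw [this]
        _ = 0 := hj
    exact mul_self_eq_zero.mp h2
  have htermΛ : ∀ j, Λ j * Uᵀ.mulVec x j = 0 := by
    intro j
    have := congrArg (fun t => Real.sqrt (Λ j) * t) (hterm j)
    simpa [← mul_assoc, Real.mul_self_sqrt (hΛ j)] using this
  -- (U Dh)ᵀ x = 0
  have hBTx : (U * Dh)ᵀ.mulVec x = 0 := by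
    funext j
    rw [Matrix.transpose_mul, ← Matrix.mulVec_mulVec, hDh]
    simp only [Matrix.diagonal_transpose, Matrix.mulVec_diagonal, Pi.zero_apply]
    exact hterm j
  ext v
  simp only [Set.mem_setOf_eq, Set.mem_image]
  constructor
  · -- forward: v is a subgradient ⇒ v = U Dh z with ‖z‖ ≤ 1
    intro hv
    set c : Fin p → ℝ := Uᵀ.mulVec v with hc
    -- reformulated condition
    have key : ∀ u : Fin p → ℝ, u ⬝ᵥ c ≤ Real.sqrt (∑ j, Λ j * (u j * u j)) := by
      intro u
      have h := hv (x + U.mulVec u)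
      rw [hx0, Real.sqrt_zero, zero_add, add_sub_cancel_left] at h
      have hleft : U.mulVec u ⬝ᵥ v = u ⬝ᵥ c := by
        rw [hc, Matrix.mulVec_transpose, dotProduct_comm, Matrix.dotProduct_mulVec,
          dotProduct_comm]
      have hright : (x + U.mulVec u) ⬝ᵥ A.mulVec (x + U.mulVec u)
          = ∑ j, Λ j * (u j * u j) := by
        rw [hform]
        refine Finset.sum_congr rfl fun j _ => ?_
        have huu : Uᵀ.mulVec (x + U.mulVec u) j = Uᵀ.mulVec x j + u j := by
          rw [Matrix.mulVec_add, Matrix.mulVec_mulVec, hU2, Matrix.one_mulVec]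
          rfl
        rw [huu]
        have h1 := htermΛ j
        linear_combination ((Uᵀ.mulVec x) j + 2 * u j) * h1
      rw [hright] at h
      rw [← hleft]
      exact h
    -- c j = 0 when Λ j = 0
    have hczero : ∀ j, Λ j = 0 → c j = 0 := by
      intro j hj
      have h1 := key (Pi.single j 1 : Fin p → ℝ)
      have h2 := key (Pi.single j (-1) : Fin p → ℝ)
      have hs : ∀ r : ℝ, ∑ k, Λ k * ((Pi.single j r : Fin p → ℝ) k * (Pi.single j r : Fin p → ℝ) k) = Λ j * (r * r) := by
        intro r
        rw [Finset.sum_eq_single j]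
        · simp
        · intro k _ hk; simp [Pi.single_apply, hk]
        · simp
      rw [hs, hj, zero_mul, Real.sqrt_zero, single_dotProduct, one_mul] at h1
      rw [hs, hj, zero_mul, Real.sqrt_zero, single_dotProduct, neg_one_mul] at h2
      linarith
    -- the sum S
    set z : Fin p → ℝ := fun j => if Λ j = 0 then 0 else c j / Real.sqrt (Λ j) with hz
    set S : ℝ := ∑ j, z j * z j with hS
    have hSnn : 0 ≤ S := Finset.sum_nonneg fun j _ => mul_self_nonneg _
    have hSle : S ≤ 1 := by
      set u : Fin p → ℝ := fun j => if Λ j = 0 then 0 else c j / Λ j with hu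
      have hA1 : u ⬝ᵥ c = S := by
        refine Finset.sum_congr rfl fun j _ => ?_
        by_cases hj : Λ j = 0
        · simp [hu, hz, hj]
        · have hΛj : 0 < Λ j := lt_of_le_of_ne (hΛ j) (Ne.symm hj)
          have hsq : Real.sqrt (Λ j) * Real.sqrt (Λ j) = Λ j := Real.mul_self_sqrt (hΛ j)
          simp only [hu, hz, if_neg hj]
          rw [div_mul_div_comm, hsq]
          ring
      have hA2 : ∑ j, Λ j * (u j * u j) = S := by
        refine Finset.sum_congr rfl fun j _ => ?_
        by_cases hj : Λ j = 0
        · simp [hu, hz, hj]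
        · have hsq : Real.sqrt (Λ j) * Real.sqrt (Λ j) = Λ j := Real.mul_self_sqrt (hΛ j)
          simp only [hu, hz, if_neg hj]
          rw [div_mul_div_comm, div_mul_div_comm, hsq]
          field_simp
      have h := key u
      rw [hA1, hA2] at h
      nlinarith [Real.sq_sqrt hSnn, Real.sqrt_nonneg S, sq_nonneg (Real.sqrt S - 1), h]
    refine ⟨z, ?_, ?_⟩
    · exact Real.sqrt_le_one.mpr (by simpa [dotProduct] using hSle)
    · -- (U Dh) z = v
      have hDz : Dh.mulVec z = c := by
        funext j
        rw [hDh, Matrix.mulVec_diagonal]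
        by_cases hj : Λ j = 0
        · simp [hz, hj, hczero j hj]
        · have hΛj : 0 < Λ j := lt_of_le_of_ne (hΛ j) (Ne.symm hj)
          have : Real.sqrt (Λ j) ≠ 0 := ne_of_gt (Real.sqrt_pos.mpr hΛj)
          simp only [hz, if_neg hj]
          field_simp
      rw [← Matrix.mulVec_mulVec, hDz, hc, Matrix.mulVec_mulVec, hU1, Matrix.one_mulVec]
  · -- reverse: v = U Dh z with ‖z‖ ≤ 1 ⇒ v is a subgradient
    rintro ⟨z, hznorm, rfl⟩
    intro y
    rw [hx0, Real.sqrt_zero, zero_add]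
    have hz1 : z ⬝ᵥ z ≤ 1 := Real.sqrt_le_one.mp hznorm
    have hstep : (y - x) ⬝ᵥ (U * Dh).mulVec z = (U * Dh)ᵀ.mulVec y ⬝ᵥ z := by
      rw [Matrix.dotProduct_mulVec, ← Matrix.mulVec_transpose, Matrix.mulVec_sub, hBTx,
        sub_zero]
    rw [hstep]
    have hCS := dotCS ((U * Dh)ᵀ.mulVec y) z
    have hquad : (U * Dh)ᵀ.mulVec y ⬝ᵥ (U * Dh)ᵀ.mulVec y = y ⬝ᵥ A.mulVec y := by
      rw [hform]
      rw [Matrix.transpose_mul, ← Matrix.mulVec_mulVec, hDh]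
      simp only [Matrix.diagonal_transpose, Matrix.mulVec_diagonal, dotProduct]
      refine Finset.sum_congr rfl fun j _ => ?_
      have hsq : Real.sqrt (Λ j) * Real.sqrt (Λ j) = Λ j := Real.mul_self_sqrt (hΛ j)
      conv_rhs => rw [← hsq]
      ring
    calc (U * Dh)ᵀ.mulVec y ⬝ᵥ z
        ≤ Real.sqrt ((U * Dh)ᵀ.mulVec y ⬝ᵥ (U * Dh)ᵀ.mulVec y) * Real.sqrt (z ⬝ᵥ z) := hCS
      _ ≤ Real.sqrt (y ⬝ᵥ A.mulVec y) * 1 := by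
          rw [hquad]
          exact mul_le_mul_of_nonneg_left (Real.sqrt_le_one.mpr hz1) (Real.sqrt_nonneg _)
      _ = Real.sqrt (y ⬝ᵥ A.mulVec y) := mul_one _
end

section
/- Let r be a seminorm on a real inner product space decomposable with respect to an orthogonal pair of subspaces (M, M⊥), meaning r(θ₁ + θ₂) = r(θ₁) + r(θ₂) whenever θ₁ ∈ M and θ₂ ∈ M⊥. Then for any Θ₀ ∈ M and any Δ with orthogonal decomposition Δ = Δ_M + Δ_{M⊥}, one has r(Θ₀ + Δ) − r(Θ₀) ≥ r(Δ_{M⊥}) − r(Δ_M). -/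
/-- If `r` is a seminorm on a real inner product space, decomposable with respect to the
orthogonal pair `(M, Mᗮ)`, then for `Θ₀ ∈ M` and `Δ = Δ_M + Δ_{M⊥}` with `Δ_M ∈ M`,
`Δ_{M⊥} ∈ Mᗮ`, one has `r (Θ₀ + Δ) − r Θ₀ ≥ r Δ_{M⊥} − r Δ_M`. -/
theorem decomposable_seminorm_lower_bound {E : Type*}
    [NormedAddCommGroup E] [InnerProductSpace ℝ E]
    (r : E → ℝ) (hr_nonneg : ∀ x, 0 ≤ r x)
    (hr_tri : ∀ x y, r (x + y) ≤ r x + r y)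
    (hr_hom : ∀ (c : ℝ) (x : E), r (c • x) = |c| * r x)
    (M : Submodule ℝ E)
    (hdec : ∀ θ₁ ∈ M, ∀ θ₂ ∈ Mᗮ, r (θ₁ + θ₂) = r θ₁ + r θ₂)
    (Θ₀ : E) (hΘ₀ : Θ₀ ∈ M)
    (Δ ΔM ΔMp : E) (hΔM : ΔM ∈ M) (hΔMp : ΔMp ∈ Mᗮ) (hΔ : Δ = ΔM + ΔMp) :
    r ΔMp - r ΔM ≤ r (Θ₀ + Δ) - r Θ₀ := by
  have h1 : r (Θ₀ + Δ) = r (Θ₀ + ΔM) + r ΔMp := by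
    rw [hΔ, ← add_assoc]
    exact hdec _ (M.add_mem hΘ₀ hΔM) _ hΔMp
  have hneg : r (-ΔM) = r ΔM := by
    have := hr_hom (-1) ΔM; simpa using this
  have h2 : r Θ₀ ≤ r (Θ₀ + ΔM) + r ΔM := by
    have := hr_tri (Θ₀ + ΔM) (-ΔM)
    simpa [hneg] using this
  linarith
end

section
/- Let X ∈ ℝ^p be a multivariate normal random vector with mean μ_X and covariance Σ_X having eigenvalues λ_{1,X},…,λ_{p,X}. Let μ²_{X̃} = ‖μ̃_X‖²/p where μ̃_X is the mean of the whitened-and-rescaled vector, and λ̄_X = (∑_j λ_{j,X})/p. Then for any 0 < a < μ²_{X̃} + λ̄_X, P(‖X‖² < ap) ≤ exp( − p²(μ²_{X̃} + λ̄_X − a)² / (2 ∑_{j=1}^p (μ̃_{j,X}⁴ + 6 μ̃_{j,X}² λ_{j,X} + 3 λ_{j,X}²)) ). -/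
open MeasureTheory ProbabilityTheory
open Real Set
open scoped NNReal ENNReal

lemma aux_exp_quad {x : ℝ} (hx : 0 ≤ x) : Real.exp (-x) ≤ 1 - x + x^2/2 := by
  have key : ∀ y ∈ Set.Ici (0:ℝ), 0 ≤ 1 - y + y^2/2 - Real.exp (-y) := by
    intro y hy
    have hmono : MonotoneOn (fun y : ℝ => 1 - y + y^2/2 - Real.exp (-y)) (Set.Ici 0) := by
      apply monotoneOn_of_deriv_nonneg (convex_Ici 0)
      · fun_prop
      · fun_prop
      · intro z hz
        have : deriv (fun y : ℝ => 1 - y + y^2/2 - Real.exp (-y)) z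
            = -1 + z + Real.exp (-z) := by
          have h1 : HasDerivAt (fun y : ℝ => 1 - y + y^2/2 - Real.exp (-y))
              (-1 + z + Real.exp (-z)) z := by
            have e : HasDerivAt (fun y : ℝ => Real.exp (-y)) (-Real.exp (-z)) z := by
              simpa using (hasDerivAt_neg z).exp
            have p1 : HasDerivAt (fun y : ℝ => 1 - y + y^2/2) (-1 + z) z := by
              have : HasDerivAt (fun y : ℝ => 1 - y + y^2/2) (0 - 1 + 2*z^1/2) z := by
                exact (((hasDerivAt_const z (1:ℝ)).sub (hasDerivAt_id z)).add
                  ((hasDerivAt_pow 2 z).div_const 2))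
              simpa using this
            exact (sub_neg_eq_add (-1 + z) (Real.exp (-z))) ▸ p1.sub e
          rw [h1.deriv]
        rw [this]
        have := Real.add_one_le_exp (-z)
        have hz' : (0:ℝ) ≤ z := by simpa using interior_subset (s := Set.Ici (0:ℝ)) hz
        nlinarith [Real.exp_pos (-z)]
    have := hmono (Set.self_mem_Ici) hy hy
    simpa using this
  have := key x hx
  linarith

lemma aux_integral_odd {f : ℝ → ℝ} (hf : ∀ x, f (-x) = - f x) : ∫ x, f x = 0 := by
  have h1 : ∫ x : ℝ, f (-x) = ∫ x : ℝ, f x :=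
    (Measure.measurePreserving_neg (volume : Measure ℝ)).integral_comp
      (Homeomorph.neg ℝ).measurableEmbedding f
  have h2 : ∫ x : ℝ, f (-x) = - ∫ x : ℝ, f x := by
    simp_rw [hf]; exact integral_neg f
  linarith

lemma aux_integrable_pow_gauss {b : ℝ} (hb : 0 < b) (k : ℕ) :
    Integrable fun x : ℝ => x ^ k * Real.exp (-b * x^2) := by
  have := integrable_rpow_mul_exp_neg_mul_sq hb (s := (k:ℝ)) (lt_of_lt_of_le (by norm_num) (Nat.cast_nonneg k))
  simpa [Real.rpow_natCast] using this

lemma aux_integral_even_pow {b : ℝ} (hb : 0 < b) (n : ℕ) :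
    ∫ x : ℝ, x ^ (2*n) * Real.exp (-b * x^2)
      = (1/b) ^ ((n:ℝ) + 1/2) * Real.Gamma ((n:ℝ) + 1/2) := by
  have h1 : ∫ x : ℝ, x ^ (2*n) * Real.exp (-b * x^2)
      = 2 * ∫ x in Ioi (0:ℝ), x ^ (2*n) * Real.exp (-b * x^2) := by
    rw [← integral_comp_abs (f := fun x => x ^ (2*n) * Real.exp (-b * x^2))]
    congr 1 with x
    simp [pow_mul, sq_abs]
  have h2 := integral_comp_rpow_Ioi_of_pos
    (g := fun y : ℝ => (1/2) * (y ^ ((n:ℝ) + 1/2 - 1) * Real.exp (-(b * y)))) (p := 2) zero_lt_two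
  have h3 : ∀ x ∈ Ioi (0:ℝ),
      ((2:ℝ) * x ^ ((2:ℝ) - 1)) • ((1/2) * ((x ^ (2:ℝ)) ^ ((n:ℝ) + 1/2 - 1) * Real.exp (-(b * x ^ (2:ℝ)))))
        = x ^ (2*n) * Real.exp (-b * x^2) := by
    intro x hx
    have hx0 : (0:ℝ) < x := hx
    rw [smul_eq_mul]
    have e1 : x ^ ((2:ℝ) - 1) = x := by norm_num
    have e2 : (x ^ (2:ℝ)) = x ^ (2:ℕ) := Real.rpow_two x
    have e3 : ((x : ℝ) ^ (2:ℕ)) ^ ((n:ℝ) + 1/2 - 1) = x ^ (2 * ((n:ℝ) + 1/2 - 1)) := by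
      rw [← Real.rpow_natCast x 2, ← Real.rpow_mul hx0.le]; norm_num
    have e4 : x ^ (1:ℝ) * x ^ (2 * ((n:ℝ) + 1/2 - 1)) = x ^ ((2*n : ℕ) : ℝ) := by
      rw [← Real.rpow_add hx0]; congr 1; push_cast; ring
    have e5 : x ^ ((2*n:ℕ):ℝ) = x ^ (2*n:ℕ) := Real.rpow_natCast x (2*n)
    have e6 : x ^ (1:ℝ) = x := Real.rpow_one x
    calc (2 * x ^ ((2:ℝ)-1)) * (1/2 * ((x ^ (2:ℝ)) ^ ((n:ℝ) + 1/2 - 1) * Real.exp (-(b * x ^ (2:ℝ)))))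
        = (x ^ (1:ℝ) * x ^ (2 * ((n:ℝ) + 1/2 - 1))) * Real.exp (-(b * x ^ (2:ℕ))) := by
          rw [e1, e2, e3, e6]; ring
      _ = x ^ (2*n:ℕ) * Real.exp (-b * x ^ 2) := by rw [e4, e5]; norm_num
  rw [setIntegral_congr_fun measurableSet_Ioi h3] at h2
  have h4 : ∫ y in Ioi (0:ℝ), (1/2) * (y ^ ((n:ℝ) + 1/2 - 1) * Real.exp (-(b * y)))
      = (1/2) * ((1/b) ^ ((n:ℝ) + 1/2) * Real.Gamma ((n:ℝ) + 1/2)) := by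
    rw [integral_const_mul]
    congr 1
    exact Real.integral_rpow_mul_exp_neg_mul_Ioi (by positivity) hb
  rw [h4] at h2
  rw [h1, h2]; ring

lemma aux_sqrt2piv {v : ℝ} (hv : 0 < v) :
    Real.sqrt (2*π*v) = Real.sqrt (2*v) * Real.sqrt π := by
  rw [← Real.sqrt_mul (by positivity)]
  ring_nf

lemma aux_rpow_2v {v : ℝ} (hv : 0 < v) (n : ℕ) :
    (2*v) ^ ((n:ℝ) + 1/2) = (2*v)^n * Real.sqrt (2*v) := by
  rw [Real.rpow_add (by positivity), Real.rpow_natCast]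
  congr 1
  rw [← Real.sqrt_eq_rpow]

lemma aux_gauss_mom0 {v : ℝ} (hv : 0 < v) :
    ∫ x : ℝ, Real.exp (-(2*v)⁻¹ * x^2) = Real.sqrt (2*π*v) := by
  rw [integral_gaussian]
  congr 1
  field_simp

lemma aux_gauss_mom2 {v : ℝ} (hv : 0 < v) :
    ∫ x : ℝ, x^2 * Real.exp (-(2*v)⁻¹ * x^2) = Real.sqrt (2*π*v) * v := by
  have h := aux_integral_even_pow (b := (2*v)⁻¹) (by positivity) 1
  have e0 : (1 / (2*v)⁻¹ : ℝ) = 2*v := by field_simp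
  rw [e0, show 2*1 = 2 from rfl, Nat.cast_one] at h
  have hg : Real.Gamma ((1:ℝ) + 1/2) = Real.sqrt π / 2 := by
    rw [show ((1:ℝ) + 1/2) = 1/2 + 1 by ring, Real.Gamma_add_one (by norm_num),
      Real.Gamma_one_half_eq]
    ring
  have hr : (2*v) ^ ((1:ℝ) + 1/2) = (2*v)^(1:ℕ) * Real.sqrt (2*v) := by
    have := aux_rpow_2v hv 1; rwa [Nat.cast_one] at this
  rw [h, hr, hg, aux_sqrt2piv hv, pow_one]
  ring_nf

lemma aux_gauss_mom4 {v : ℝ} (hv : 0 < v) :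
    ∫ x : ℝ, x^4 * Real.exp (-(2*v)⁻¹ * x^2) = Real.sqrt (2*π*v) * (3*v^2) := by
  have h := aux_integral_even_pow (b := (2*v)⁻¹) (by positivity) 2
  have e0 : (1 / (2*v)⁻¹ : ℝ) = 2*v := by field_simp
  rw [e0, show 2*2 = 4 from rfl, Nat.cast_ofNat] at h
  have hg : Real.Gamma ((2:ℝ) + 1/2) = 3 * Real.sqrt π / 4 := by
    rw [show ((2:ℝ) + 1/2) = (1/2 + 1) + 1 by ring, Real.Gamma_add_one (by norm_num),
      Real.Gamma_add_one (by norm_num), Real.Gamma_one_half_eq]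
    ring
  have hr : (2*v) ^ ((2:ℝ) + 1/2) = (2*v)^(2:ℕ) * Real.sqrt (2*v) := by
    have := aux_rpow_2v hv 2; rwa [Nat.cast_ofNat] at this
  rw [h, hr, hg, aux_sqrt2piv hv]
  ring_nf

section
variable {m : ℝ} {v : ℝ≥0}

lemma aux_pdf_eq (m : ℝ) (v : ℝ≥0) (x : ℝ) :
    gaussianPDFReal m v x
      = (Real.sqrt (2*π*v))⁻¹ * Real.exp (-(2*(v:ℝ))⁻¹ * (x - m)^2) := by
  rw [gaussianPDFReal]
  congr 2
  rw [neg_div, neg_mul]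
  congr 1
  rw [div_eq_inv_mul]

lemma aux_key2 (hv : 0 < (v:ℝ)) (y : ℝ) :
    gaussianPDFReal m v (y + m) * (y + m)^2
      = (Real.sqrt (2*π*v))⁻¹ * (y^2 * Real.exp (-(2*(v:ℝ))⁻¹ * y^2))
        + (2*m*(Real.sqrt (2*π*v))⁻¹) * (y^1 * Real.exp (-(2*(v:ℝ))⁻¹ * y^2))
        + (m^2*(Real.sqrt (2*π*v))⁻¹) * (y^0 * Real.exp (-(2*(v:ℝ))⁻¹ * y^2)) := by
  rw [aux_pdf_eq]
  simp only [add_sub_cancel_right, pow_zero, pow_one]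
  ring

lemma aux_key4 (hv : 0 < (v:ℝ)) (y : ℝ) :
    gaussianPDFReal m v (y + m) * (y + m)^4
      = (Real.sqrt (2*π*v))⁻¹ * (y^4 * Real.exp (-(2*(v:ℝ))⁻¹ * y^2))
        + (4*m*(Real.sqrt (2*π*v))⁻¹) * (y^3 * Real.exp (-(2*(v:ℝ))⁻¹ * y^2))
        + (6*m^2*(Real.sqrt (2*π*v))⁻¹) * (y^2 * Real.exp (-(2*(v:ℝ))⁻¹ * y^2))
        + (4*m^3*(Real.sqrt (2*π*v))⁻¹) * (y^1 * Real.exp (-(2*(v:ℝ))⁻¹ * y^2))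
        + (m^4*(Real.sqrt (2*π*v))⁻¹) * (y^0 * Real.exp (-(2*(v:ℝ))⁻¹ * y^2)) := by
  rw [aux_pdf_eq]
  simp only [add_sub_cancel_right, pow_zero, pow_one]
  ring

lemma aux_integrable_shift2 (hv : 0 < (v:ℝ)) :
    Integrable (fun y : ℝ => gaussianPDFReal m v (y + m) * (y + m)^2) := by
  have hb : (0:ℝ) < (2*(v:ℝ))⁻¹ := by positivity
  have h := (((aux_integrable_pow_gauss hb 2).const_mul ((Real.sqrt (2*π*v))⁻¹)).add
    ((aux_integrable_pow_gauss hb 1).const_mul (2*m*(Real.sqrt (2*π*v))⁻¹))).add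
    ((aux_integrable_pow_gauss hb 0).const_mul (m^2*(Real.sqrt (2*π*v))⁻¹))
  exact h.congr (ae_of_all _ fun y => (aux_key2 hv y).symm)

lemma aux_integrable_shift4 (hv : 0 < (v:ℝ)) :
    Integrable (fun y : ℝ => gaussianPDFReal m v (y + m) * (y + m)^4) := by
  have hb : (0:ℝ) < (2*(v:ℝ))⁻¹ := by positivity
  have h := (((((aux_integrable_pow_gauss hb 4).const_mul ((Real.sqrt (2*π*v))⁻¹)).add
    ((aux_integrable_pow_gauss hb 3).const_mul (4*m*(Real.sqrt (2*π*v))⁻¹))).add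
    ((aux_integrable_pow_gauss hb 2).const_mul (6*m^2*(Real.sqrt (2*π*v))⁻¹))).add
    ((aux_integrable_pow_gauss hb 1).const_mul (4*m^3*(Real.sqrt (2*π*v))⁻¹))).add
    ((aux_integrable_pow_gauss hb 0).const_mul (m^4*(Real.sqrt (2*π*v))⁻¹))
  exact h.congr (ae_of_all _ fun y => (aux_key4 hv y).symm)

lemma aux_mp_shift (m : ℝ) : MeasurePreserving (fun y : ℝ => y + m) volume volume :=
  measurePreserving_add_right volume m

lemma aux_emb_shift (m : ℝ) : MeasurableEmbedding (fun y : ℝ => y + m) :=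
  (Homeomorph.addRight m).isClosedEmbedding.measurableEmbedding

lemma aux_integrable_vol2 (hv : 0 < (v:ℝ)) :
    Integrable (fun x : ℝ => gaussianPDFReal m v x * x^2) := by
  have := ((aux_mp_shift m).integrable_comp_emb (aux_emb_shift m)
    (g := fun x : ℝ => gaussianPDFReal m v x * x^2)).mp ?_
  · exact this
  · exact aux_integrable_shift2 hv

lemma aux_integrable_vol4 (hv : 0 < (v:ℝ)) :
    Integrable (fun x : ℝ => gaussianPDFReal m v x * x^4) := by
  exact ((aux_mp_shift m).integrable_comp_emb (aux_emb_shift m)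
    (g := fun x : ℝ => gaussianPDFReal m v x * x^4)).mp (aux_integrable_shift4 hv)

lemma aux_vol_mom2 (hv : 0 < (v:ℝ)) :
    ∫ x : ℝ, gaussianPDFReal m v x * x^2 = m^2 + (v:ℝ) := by
  have hb : (0:ℝ) < (2*(v:ℝ))⁻¹ := by positivity
  have hshift : ∫ x : ℝ, gaussianPDFReal m v x * x^2
      = ∫ y : ℝ, gaussianPDFReal m v (y + m) * (y + m)^2 :=
    ((aux_mp_shift m).integral_comp (aux_emb_shift m)
      (fun x : ℝ => gaussianPDFReal m v x * x^2)).symm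
  rw [hshift]
  rw [integral_congr_ae (ae_of_all _ (aux_key2 hv))]
  have i2 := (aux_integrable_pow_gauss hb 2).const_mul ((Real.sqrt (2*π*v))⁻¹)
  have i1 := (aux_integrable_pow_gauss hb 1).const_mul (2*m*(Real.sqrt (2*π*v))⁻¹)
  have i0 := (aux_integrable_pow_gauss hb 0).const_mul (m^2*(Real.sqrt (2*π*v))⁻¹)
  have k1 := integral_add (μ := volume) (i2.add i1) i0
  simp only [Pi.add_apply] at k1
  rw [k1, integral_add i2 i1]
  rw [integral_const_mul, integral_const_mul, integral_const_mul]
  have hodd1 : ∫ y : ℝ, y^1 * Real.exp (-(2*(v:ℝ))⁻¹ * y^2) = 0 := by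
    apply aux_integral_odd; intro x
    rw [show ((-x:ℝ))^2 = x^2 by ring]; ring
  have h0 : ∫ y : ℝ, y^0 * Real.exp (-(2*(v:ℝ))⁻¹ * y^2) = Real.sqrt (2*π*(v:ℝ)) := by
    simp only [pow_zero, one_mul]; exact aux_gauss_mom0 hv
  rw [hodd1, h0, aux_gauss_mom2 hv]
  have hs : Real.sqrt (2*π*(v:ℝ)) ≠ 0 := by positivity
  field_simp
  ring
lemma aux_vol_mom4 (hv : 0 < (v:ℝ)) :
    ∫ x : ℝ, gaussianPDFReal m v x * x^4
      = m^4 + 6*m^2*(v:ℝ) + 3*(v:ℝ)^2 := by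
  have hb : (0:ℝ) < (2*(v:ℝ))⁻¹ := by positivity
  have hshift : ∫ x : ℝ, gaussianPDFReal m v x * x^4
      = ∫ y : ℝ, gaussianPDFReal m v (y + m) * (y + m)^4 :=
    ((aux_mp_shift m).integral_comp (aux_emb_shift m)
      (fun x : ℝ => gaussianPDFReal m v x * x^4)).symm
  rw [hshift]
  rw [integral_congr_ae (ae_of_all _ (aux_key4 hv))]
  have i4 := (aux_integrable_pow_gauss hb 4).const_mul ((Real.sqrt (2*π*v))⁻¹)
  have i3 := (aux_integrable_pow_gauss hb 3).const_mul (4*m*(Real.sqrt (2*π*v))⁻¹)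
  have i2 := (aux_integrable_pow_gauss hb 2).const_mul (6*m^2*(Real.sqrt (2*π*v))⁻¹)
  have i1 := (aux_integrable_pow_gauss hb 1).const_mul (4*m^3*(Real.sqrt (2*π*v))⁻¹)
  have i0 := (aux_integrable_pow_gauss hb 0).const_mul (m^4*(Real.sqrt (2*π*v))⁻¹)
  have k1 := integral_add (μ := volume) (((i4.add i3).add i2).add i1) i0
  simp only [Pi.add_apply] at k1
  rw [k1]
  have k2 := integral_add (μ := volume) ((i4.add i3).add i2) i1
  simp only [Pi.add_apply] at k2
  rw [k2]
  have k3 := integral_add (μ := volume) (i4.add i3) i2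
  simp only [Pi.add_apply] at k3
  rw [k3, integral_add i4 i3]
  rw [integral_const_mul, integral_const_mul, integral_const_mul, integral_const_mul,
    integral_const_mul]
  have hodd1 : ∫ y : ℝ, y^1 * Real.exp (-(2*(v:ℝ))⁻¹ * y^2) = 0 := by
    apply aux_integral_odd; intro x
    rw [show ((-x:ℝ))^2 = x^2 by ring]; ring
  have hodd3 : ∫ y : ℝ, y^3 * Real.exp (-(2*(v:ℝ))⁻¹ * y^2) = 0 := by
    apply aux_integral_odd; intro x
    rw [show ((-x:ℝ))^2 = x^2 by ring]; ring
  have h0 : ∫ y : ℝ, y^0 * Real.exp (-(2*(v:ℝ))⁻¹ * y^2) = Real.sqrt (2*π*(v:ℝ)) := by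
    simp only [pow_zero, one_mul]; exact aux_gauss_mom0 hv
  rw [hodd1, hodd3, h0, aux_gauss_mom2 hv, aux_gauss_mom4 hv]
  have hs : Real.sqrt (2*π*(v:ℝ)) ≠ 0 := by positivity
  field_simp
  ring
end

lemma aux_gaussianReal_integral (m : ℝ) {v : ℝ≥0} (hv : v ≠ 0) (g : ℝ → ℝ) :
    ∫ x, g x ∂(gaussianReal m v) = ∫ x, gaussianPDFReal m v x * g x := by
  rw [gaussianReal_of_var_ne_zero m hv]
  rw [show (gaussianPDF m v)
      = fun x => ((Real.toNNReal (gaussianPDFReal m v x) : ℝ≥0) : ℝ≥0∞) from rfl]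
  rw [integral_withDensity_eq_integral_smul
    ((measurable_gaussianPDFReal m v).real_toNNReal) g]
  congr 1 with x
  simp [NNReal.smul_def, Real.coe_toNNReal _ (gaussianPDFReal_nonneg m v x)]

lemma aux_gaussianReal_integrable (m : ℝ) {v : ℝ≥0} (hv : v ≠ 0) {g : ℝ → ℝ}
    (hint : Integrable (fun x => gaussianPDFReal m v x * g x)) :
    Integrable g (gaussianReal m v) := by
  rw [gaussianReal_of_var_ne_zero m hv]
  rw [show (gaussianPDF m v)
      = fun x => ((Real.toNNReal (gaussianPDFReal m v x) : ℝ≥0) : ℝ≥0∞) from rfl]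
  rw [integrable_withDensity_iff_integrable_coe_smul
    ((measurable_gaussianPDFReal m v).real_toNNReal)]
  apply hint.congr (ae_of_all _ fun x => ?_)
  simp [NNReal.smul_def, Real.coe_toNNReal _ (gaussianPDFReal_nonneg m v x)]

lemma aux_mgf_bound (m : ℝ) (v : ℝ≥0) {s : ℝ} (hs : 0 ≤ s) :
    ∫ x, Real.exp (-s * x^2) ∂(gaussianReal m v)
      ≤ Real.exp (-s*(m^2+(v:ℝ)) + s^2*(m^4+6*m^2*(v:ℝ)+3*(v:ℝ)^2)/2) := by
  have pointwise : ∀ x : ℝ, Real.exp (-s * x^2) ≤ 1 - s*x^2 + s^2*x^4/2 := by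
    intro x
    have h := aux_exp_quad (x := s*x^2) (by positivity)
    rw [show -s * x^2 = -(s*x^2) by ring]
    calc Real.exp (-(s*x^2)) ≤ 1 - s*x^2 + (s*x^2)^2/2 := h
      _ = 1 - s*x^2 + s^2*x^4/2 := by ring
  by_cases hv : v = 0
  · subst hv
    rw [gaussianReal_zero_var, integral_dirac]
    calc Real.exp (-s * m^2) ≤ 1 - s*m^2 + s^2*m^4/2 := pointwise m
      _ ≤ Real.exp (-s*m^2 + s^2*m^4/2) := by
          have := Real.add_one_le_exp (-s*m^2 + s^2*m^4/2)
          linarith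
      _ = Real.exp (-s*(m^2+(0:ℝ≥0)) + s^2*(m^4+6*m^2*((0:ℝ≥0):ℝ)+3*((0:ℝ≥0):ℝ)^2)/2) := by
          norm_num
  · have hv0 : 0 < (v:ℝ) := by
      have : 0 < v := pos_iff_ne_zero.mpr hv
      exact_mod_cast this
    have hInt2 : Integrable (fun x : ℝ => x^2) (gaussianReal m v) :=
      aux_gaussianReal_integrable m hv (aux_integrable_vol2 hv0)
    have hInt4 : Integrable (fun x : ℝ => x^4) (gaussianReal m v) :=
      aux_gaussianReal_integrable m hv (aux_integrable_vol4 hv0)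
    have hM2 : ∫ x, x^2 ∂(gaussianReal m v) = m^2 + (v:ℝ) := by
      rw [aux_gaussianReal_integral m hv]; exact aux_vol_mom2 hv0
    have hM4 : ∫ x, x^4 ∂(gaussianReal m v) = m^4 + 6*m^2*(v:ℝ) + 3*(v:ℝ)^2 := by
      rw [aux_gaussianReal_integral m hv]; exact aux_vol_mom4 hv0
    have hIntExp : Integrable (fun x : ℝ => Real.exp (-s * x^2)) (gaussianReal m v) := by
      apply Integrable.mono' (integrable_const (1:ℝ))
      · exact (((measurable_id.pow_const 2).const_mul (-s)).exp).aestronglyMeasurable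
      · refine ae_of_all _ fun x => ?_
        rw [Real.norm_eq_abs, abs_of_pos (Real.exp_pos _)]
        apply Real.exp_le_one_iff.mpr
        nlinarith [sq_nonneg x]
    have hIntRHS : Integrable (fun x : ℝ => 1 - s*x^2 + s^2*x^4/2) (gaussianReal m v) := by
      have h := ((integrable_const (1:ℝ)).sub (hInt2.const_mul s)).add
        ((hInt4.const_mul (s^2)).div_const 2)
      exact h.congr (ae_of_all _ fun x => by simp)
    have step1 : ∫ x, Real.exp (-s * x^2) ∂(gaussianReal m v)
        ≤ ∫ x, (1 - s*x^2 + s^2*x^4/2) ∂(gaussianReal m v) :=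
      integral_mono hIntExp hIntRHS fun x => pointwise x
    have step2 : ∫ x, (1 - s*x^2 + s^2*x^4/2) ∂(gaussianReal m v)
        = 1 - s*(m^2+(v:ℝ)) + s^2*(m^4+6*m^2*(v:ℝ)+3*(v:ℝ)^2)/2 := by
      have k1 := integral_add (μ := gaussianReal m v)
        ((integrable_const (1:ℝ)).sub (hInt2.const_mul s))
        ((hInt4.const_mul (s^2)).div_const 2)
      simp only [Pi.add_apply, Pi.sub_apply] at k1
      have k2 := integral_sub (μ := gaussianReal m v) (integrable_const (1:ℝ))
        (hInt2.const_mul s)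
      rw [k1, k2, integral_const, integral_const_mul]
      have k3 := integral_div (μ := gaussianReal m v) 2 (fun x : ℝ => s^2 * x^4)
      rw [k3, integral_const_mul, hM2, hM4]
      simp [measure_univ]
    rw [step2] at step1
    calc ∫ x, Real.exp (-s * x^2) ∂(gaussianReal m v)
        ≤ 1 - s*(m^2+(v:ℝ)) + s^2*(m^4+6*m^2*(v:ℝ)+3*(v:ℝ)^2)/2 := step1
      _ ≤ Real.exp (-s*(m^2+(v:ℝ)) + s^2*(m^4+6*m^2*(v:ℝ)+3*(v:ℝ)^2)/2) := by
          have := Real.add_one_le_exp (-s*(m^2+(v:ℝ)) + s^2*(m^4+6*m^2*(v:ℝ)+3*(v:ℝ)^2)/2)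
          linarith

/-- Lower-tail bound for the squared norm of a Gaussian vector with independent components
`X_j ∼ N(μ_j, λ_j)`: for `0 < a < μ̄² + λ̄`,
`P(‖X‖² < a p) ≤ exp(−p²(μ̄² + λ̄ − a)² / (2 ∑_j (μ_j⁴ + 6 μ_j² λ_j + 3 λ_j²)))`. -/
theorem gaussian_norm_sq_lower_tail {Ω : Type*} [MeasurableSpace Ω]
    (P : Measure Ω) [IsProbabilityMeasure P]
    {p : ℕ} (hp : 0 < p)
    (X : Fin p → Ω → ℝ) (hmeas : ∀ j, Measurable (X j))
    (m : Fin p → ℝ) (lam : Fin p → NNReal)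
    (hlaw : ∀ j, P.map (X j) = gaussianReal (m j) (lam j))
    (hindep : iIndepFun X P)
    (a : ℝ) (ha : 0 < a)
    (ha2 : a < (∑ j, (m j) ^ 2) / p + (∑ j, (lam j : ℝ)) / p) :
    (P {ω | ∑ j, (X j ω) ^ 2 < a * p}).toReal ≤
      Real.exp (-((p : ℝ) ^ 2 *
          ((∑ j, (m j) ^ 2) / p + (∑ j, (lam j : ℝ)) / p - a) ^ 2 /
        (2 * ∑ j, ((m j) ^ 4 + 6 * (m j) ^ 2 * (lam j : ℝ) + 3 * (lam j : ℝ) ^ 2)))) := by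
  have hp' : (0:ℝ) < p := by exact_mod_cast hp
  set A : Fin p → ℝ := fun j => (m j)^2 + (lam j : ℝ) with hA
  set B : Fin p → ℝ := fun j => (m j)^4 + 6*(m j)^2*(lam j:ℝ) + 3*(lam j:ℝ)^2 with hB
  set Esum : ℝ := ∑ j, A j with hEsum
  set V : ℝ := ∑ j, B j with hV
  have hEsum' : Esum = (∑ j, (m j)^2) + ∑ j, (lam j : ℝ) := by
    rw [hEsum, hA]; rw [Finset.sum_add_distrib]
  have hVeq : V = ∑ j, ((m j) ^ 4 + 6 * (m j) ^ 2 * (lam j : ℝ) + 3 * (lam j : ℝ) ^ 2) := rfl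
  have ha2' : a * p < Esum := by
    rw [hEsum']
    have : a < ((∑ j, (m j)^2) + ∑ j, (lam j : ℝ)) / p := by
      rw [add_div]; exact ha2
    calc a * p < (((∑ j, (m j)^2) + ∑ j, (lam j : ℝ)) / p) * p := by
          exact mul_lt_mul_of_pos_right this hp'
      _ = (∑ j, (m j)^2) + ∑ j, (lam j : ℝ) := by field_simp
  set t : ℝ := Esum - a * p with htdef
  have ht : 0 < t := by rw [htdef]; linarith
  have hVpos : 0 < V := by
    rcases lt_or_ge 0 V with h | h
    · exact h
    have hBnn : ∀ j ∈ Finset.univ, 0 ≤ B j := fun j _ => by rw [hB]; positivity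
    have hV0 : V = 0 := le_antisymm h (Finset.sum_nonneg hBnn)
    have hall' : ∀ j ∈ Finset.univ, B j = 0 :=
      (Finset.sum_eq_zero_iff_of_nonneg hBnn).mp (by rw [← hV]; exact hV0)
    have hEzero : Esum = 0 := by
      rw [hEsum]
      apply Finset.sum_eq_zero
      intro j hj
      have hBj : (m j)^4 + 6*(m j)^2*(lam j:ℝ) + 3*(lam j:ℝ)^2 = 0 := hall' j hj
      have h4 : (m j)^4 = 0 := by nlinarith [sq_nonneg (m j), NNReal.coe_nonneg (lam j), sq_nonneg ((lam j:ℝ))]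
      have hl : (lam j : ℝ) = 0 := by nlinarith [sq_nonneg (m j), NNReal.coe_nonneg (lam j), sq_nonneg ((lam j:ℝ))]
      have hm : m j = 0 := by
        have := pow_eq_zero_iff (n := 4) (by norm_num) |>.mp h4
        exact this
      rw [hA]; simp [hm, hl]
    have : (0:ℝ) < a * p := by positivity
    linarith
  set s : ℝ := t / V with hsdef
  have hs : 0 < s := div_pos ht hVpos
  set Y : Fin p → Ω → ℝ := fun j ω => (X j ω)^2 with hY
  have hYmeas : ∀ j, Measurable (Y j) := fun j => (hmeas j).pow_const 2
  have hYindep : iIndepFun Y P :=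
    hindep.comp (fun _ => fun x : ℝ => x^2) (fun _ => measurable_id.pow_const 2)
  set e : Fin p → ℝ := fun j => (-s) * A j + (s^2/2) * B j with he
  clear_value A B Esum V t s e
  -- integrability of exp(-s * S)
  have hint : Integrable (fun ω => Real.exp (-s * (∑ j, Y j) ω)) P := by
    apply Integrable.mono' (integrable_const (1:ℝ))
    · apply Measurable.aestronglyMeasurable
      apply Measurable.exp
      apply Measurable.const_mul
      have hfe : (∑ j, Y j) = fun ω => ∑ j, Y j ω := by
        ext ω; simp [Finset.sum_apply]
      rw [hfe]
      exact Finset.measurable_sum _ (fun j _ => hYmeas j)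
    · refine ae_of_all _ fun ω => ?_
      rw [Real.norm_eq_abs, abs_of_pos (Real.exp_pos _)]
      apply Real.exp_le_one_iff.mpr
      simp only [Finset.sum_apply]
      have h0 : 0 ≤ ∑ j, Y j ω := Finset.sum_nonneg fun j _ => sq_nonneg _
      have := mul_nonneg hs.le h0
      linarith
  have hchern := measure_le_le_exp_mul_mgf (μ := P) (X := ∑ j, Y j) (a * p)
    (neg_nonpos.mpr hs.le) hint
  have hmgf_j : ∀ j, mgf (Y j) P (-s) ≤ Real.exp (e j) := by
    intro j
    have hmap : mgf (Y j) P (-s) = ∫ x, Real.exp (-s * x^2) ∂(gaussianReal (m j) (lam j)) := by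
      rw [← hlaw j, integral_map (hmeas j).aemeasurable
        ((by fun_prop : Measurable fun x : ℝ => Real.exp (-s * x^2)).aestronglyMeasurable)]
      rfl
    rw [hmap]
    calc ∫ x, Real.exp (-s * x^2) ∂(gaussianReal (m j) (lam j))
        ≤ Real.exp (-s*((m j)^2+(lam j:ℝ))
            + s^2*((m j)^4+6*(m j)^2*(lam j:ℝ)+3*(lam j:ℝ)^2)/2) :=
          aux_mgf_bound (m j) (lam j) hs.le
      _ = Real.exp (e j) := by rw [he, hA, hB]; congr 1; ring
  have hsub : {ω | ∑ j, (X j ω)^2 < a * p} ⊆ {ω | (∑ j, Y j) ω ≤ a * p} := by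
    intro ω hω
    simp only [Set.mem_setOf_eq, Finset.sum_apply] at hω ⊢
    exact le_of_lt hω
  have hsum_e : ∑ j, e j = (-s) * Esum + (s^2/2) * V := by
    rw [he, Finset.sum_add_distrib, ← Finset.mul_sum, ← Finset.mul_sum, hEsum, hV]
  have hexp_eq : s * (a * p) + ((-s) * Esum + (s^2/2) * V)
      = -((p : ℝ) ^ 2 * ((∑ j, (m j) ^ 2) / p + (∑ j, (lam j : ℝ)) / p - a) ^ 2 / (2 * V)) := by
    have hstep : (∑ j, (m j) ^ 2) / (p:ℝ) + (∑ j, (lam j : ℝ)) / p = Esum / p := by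
      rw [hEsum', add_div]
    rw [hstep, hsdef, htdef]
    field_simp
    ring
  calc (P {ω | ∑ j, (X j ω)^2 < a * p}).toReal
      ≤ (P {ω | (∑ j, Y j) ω ≤ a * p}).toReal :=
        ENNReal.toReal_mono (measure_ne_top _ _) (measure_mono hsub)
    _ ≤ Real.exp (-(-s) * (a * p)) * mgf (∑ j, Y j) P (-s) := hchern
    _ = Real.exp (s * (a * p)) * ∏ j, mgf (Y j) P (-s) := by
        rw [hYindep.mgf_sum hYmeas, neg_neg]
    _ ≤ Real.exp (s * (a * p)) * ∏ j, Real.exp (e j) := by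
        apply mul_le_mul_of_nonneg_left _ (Real.exp_pos _).le
        exact Finset.prod_le_prod (fun j _ => mgf_nonneg) (fun j _ => hmgf_j j)
    _ = Real.exp (s * (a * p) + ∑ j, e j) := by
        rw [← Real.exp_sum, ← Real.exp_add]
    _ = Real.exp (-((p : ℝ) ^ 2 *
          ((∑ j, (m j) ^ 2) / p + (∑ j, (lam j : ℝ)) / p - a) ^ 2 / (2 * V))) := by
        rw [hsum_e, hexp_eq]
end

section
/- Let Ψ ∈ ℝ^{p×p} be symmetric positive definite with inverse Θ. For symmetric Δ ∈ ℝ^{p×p} with ‖Δ‖_F small enough that Θ + Δ is positive definite, the function g(Δ) = −log det(Θ + Δ) + log det(Θ) + tr(ΨΔ) satisfies g(Δ) ≥ ‖Δ‖_F² / (2 (‖Θ‖₂ + ‖Δ‖_F)²). -/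
/-- The spectral norm (ℓ₂ operator norm) of a real square matrix. -/
noncomputable def specNorm {p : ℕ} (A : Matrix (Fin p) (Fin p) ℝ) : ℝ :=
  ‖Matrix.toEuclideanCLM (𝕜 := ℝ) (n := Fin p) A‖

/-- The Frobenius norm of a real square matrix. -/
noncomputable def frobNorm {p : ℕ} (A : Matrix (Fin p) (Fin p) ℝ) : ℝ :=
  Real.sqrt (∑ i, ∑ j, (A i j) ^ 2)

open Matrix
open scoped MatrixOrder


lemma specNorm_nonneg {p : ℕ} (A : Matrix (Fin p) (Fin p) ℝ) : 0 ≤ specNorm A :=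
  norm_nonneg _

lemma quadform_le_specNorm {p : ℕ} (Q : Matrix (Fin p) (Fin p) ℝ) (x : Fin p → ℝ) :
    x ⬝ᵥ (Q *ᵥ x) ≤ specNorm Q * (x ⬝ᵥ x) := by
  set y : EuclideanSpace ℝ (Fin p) := (WithLp.equiv _ _).symm x with hy
  set T := Matrix.toEuclideanCLM (𝕜 := ℝ) (n := Fin p) Q with hT
  have h1 : T y = (WithLp.equiv _ _).symm (Q *ᵥ x) := by
    rw [hy]; rfl
  have h2 : inner ℝ y (T y) = x ⬝ᵥ (Q *ᵥ x) := by
    exact inner_toEuclideanCLM Q y y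
  have h3 : (inner ℝ y y : ℝ) = x ⬝ᵥ x := by
    simp only [PiLp.inner_apply, dotProduct, RCLike.inner_apply, hy, conj_trivial, mul_comm, WithLp.equiv_symm_apply]
  calc x ⬝ᵥ (Q *ᵥ x) = inner ℝ y (T y) := h2.symm
    _ ≤ ‖y‖ * ‖T y‖ := real_inner_le_norm _ _
    _ ≤ ‖y‖ * (‖T‖ * ‖y‖) := by
        apply mul_le_mul_of_nonneg_left (T.le_opNorm y) (norm_nonneg _)
    _ = ‖T‖ * (inner ℝ y y : ℝ) := by rw [real_inner_self_eq_norm_mul_norm]; ring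
    _ = specNorm Q * (x ⬝ᵥ x) := by rw [h3]; rfl


lemma frobNorm_nonneg {p : ℕ} (A : Matrix (Fin p) (Fin p) ℝ) : 0 ≤ frobNorm A :=
  Real.sqrt_nonneg _

lemma frobNorm_sq {p : ℕ} (A : Matrix (Fin p) (Fin p) ℝ) :
    frobNorm A ^ 2 = ∑ i, ∑ j, (A i j) ^ 2 := by
  rw [frobNorm, Real.sq_sqrt]
  positivity

lemma frobNorm_sq_eq_trace {p : ℕ} (A : Matrix (Fin p) (Fin p) ℝ) :
    frobNorm A ^ 2 = (Aᵀ * A).trace := by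
  rw [frobNorm_sq, Matrix.trace, Finset.sum_comm]
  simp [Matrix.diag, Matrix.mul_apply, sq]

lemma trace_mul_le_specNorm_mul_trace {p : ℕ} (P Q : Matrix (Fin p) (Fin p) ℝ)
    (hP : P.PosSemidef) : (P * Q).trace ≤ specNorm Q * P.trace := by
  set C := CFC.sqrt P with hC
  have hCh : Cᴴ = C := (CFC.sqrt_nonneg P).posSemidef.isHermitian
  have hsym : ∀ j k, C j k = C k j := by
    intro j k
    conv_lhs => rw [← hCh]
    simp [Matrix.conjTranspose_apply]
  have hCC : C * C = P := CFC.sqrt_mul_sqrt_self P hP.nonneg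
  have h1 : (P * Q).trace = (C * Q * C).trace := by
    rw [← hCC, mul_assoc, Matrix.trace_mul_comm]
  have h2 : ∀ i, (C * Q * C) i i = (fun j => C i j) ⬝ᵥ (Q *ᵥ (fun j => C i j)) := by
    intro i
    simp only [Matrix.mul_apply, Matrix.mulVec, dotProduct, Finset.sum_mul,
      Finset.mul_sum]
    rw [Finset.sum_comm]
    refine Finset.sum_congr rfl fun j _ => Finset.sum_congr rfl fun k _ => ?_
    rw [show C k i = C i k from hsym k i]
    ring
  have h3 : ∀ i, (fun j => C i j) ⬝ᵥ (fun j => C i j) = (C * C) i i := by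
    intro i
    simp only [Matrix.mul_apply, dotProduct]
    refine Finset.sum_congr rfl fun j _ => ?_
    rw [show C j i = C i j from hsym j i]
  rw [h1, Matrix.trace]
  calc ∑ i, (C * Q * C) i i
      ≤ ∑ i, specNorm Q * ((fun j => C i j) ⬝ᵥ (fun j => C i j)) := by
        refine Finset.sum_le_sum fun i _ => ?_
        rw [h2 i]
        exact quadform_le_specNorm Q _
    _ = specNorm Q * P.trace := by
        rw [← Finset.mul_sum]
        congr 1
        rw [← hCC, Matrix.trace]
        exact Finset.sum_congr rfl fun i _ => h3 i

lemma frob_conj_le {p : ℕ} (S X : Matrix (Fin p) (Fin p) ℝ)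
    (hS : Sᵀ = S) (hX : Xᵀ = X) (hΘ : (S * S).PosSemidef) :
    frobNorm (S * X * S) ≤ specNorm (S * S) * frobNorm X := by
  have hXH : Xᴴ = X := by
    ext i j
    simp only [Matrix.conjTranspose_apply, star_trivial]
    exact (congrFun (congrFun hX j) i : Xᵀ j i = X j i) ▸ rfl
  have hsq : frobNorm (S * X * S) ^ 2 ≤ (specNorm (S * S) * frobNorm X) ^ 2 := by
    rw [frobNorm_sq_eq_trace]
    have e1 : (S * X * S)ᵀ * (S * X * S) = S * ((X * (S * S) * X) * S) := by
      rw [Matrix.transpose_mul, Matrix.transpose_mul, hS, hX]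
      noncomm_ring
    rw [e1, Matrix.trace_mul_comm, mul_assoc]
    have hP1 : (X * (S * S) * X).PosSemidef := by
      have := hΘ.conjTranspose_mul_mul_same X
      rwa [hXH] at this
    calc ((X * (S * S) * X) * (S * S)).trace
        ≤ specNorm (S * S) * (X * (S * S) * X).trace :=
          trace_mul_le_specNorm_mul_trace _ _ hP1
      _ = specNorm (S * S) * ((X * X) * (S * S)).trace := by
          rw [Matrix.trace_mul_cycle]
      _ ≤ specNorm (S * S) * (specNorm (S * S) * (X * X).trace) := by
          apply mul_le_mul_of_nonneg_left _ (specNorm_nonneg _)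
          apply trace_mul_le_specNorm_mul_trace
          have := Matrix.posSemidef_conjTranspose_mul_self X
          rwa [hXH] at this
      _ = (specNorm (S * S) * frobNorm X) ^ 2 := by
          have hXt : (X * X).trace = frobNorm X ^ 2 := by
            rw [frobNorm_sq_eq_trace, hX]
          rw [hXt]; ring
  have h0 : 0 ≤ specNorm (S * S) * frobNorm X :=
    mul_nonneg (specNorm_nonneg _) (frobNorm_nonneg _)
  nlinarith [frobNorm_nonneg (S * X * S)]

section eig
variable {p : ℕ} {M : Matrix (Fin p) (Fin p) ℝ} (hM : M.IsHermitian)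

lemma diag_ofReal : Matrix.diagonal (RCLike.ofReal ∘ hM.eigenvalues) = Matrix.diagonal hM.eigenvalues := rfl

lemma my_trace_eq_sum_eig : M.trace = ∑ i, hM.eigenvalues i := by
  set U : Matrix (Fin p) (Fin p) ℝ := (Matrix.IsHermitian.eigenvectorUnitary hM : Matrix (Fin p) (Fin p) ℝ) with hU
  have hUU : star U * U = 1 := Matrix.mem_unitaryGroup_iff'.mp (Matrix.IsHermitian.eigenvectorUnitary hM).2
  conv_lhs => rw [hM.spectral_theorem, Unitary.conjStarAlgAut_apply]
  rw [Matrix.trace_mul_cycle, hUU, one_mul, diag_ofReal hM, Matrix.trace_diagonal]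

lemma my_trace_sq_eq_sum_eig_sq : (M * M).trace = ∑ i, hM.eigenvalues i ^ 2 := by
  set U : Matrix (Fin p) (Fin p) ℝ := (Matrix.IsHermitian.eigenvectorUnitary hM : Matrix (Fin p) (Fin p) ℝ) with hU
  have hUU : star U * U = 1 := Matrix.mem_unitaryGroup_iff'.mp (Matrix.IsHermitian.eigenvectorUnitary hM).2
  set D := Matrix.diagonal hM.eigenvalues with hD
  have hMS : M = U * D * star U := by
    conv_lhs => rw [hM.spectral_theorem]
    rfl
  have : M * M = U * (D * D) * star U := by
    rw [hMS]
    calc U * D * star U * (U * D * star U) = U * D * (star U * U) * D * star U := by noncomm_ring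
      _ = U * (D * D) * star U := by rw [hUU]; noncomm_ring
  rw [this, Matrix.trace_mul_cycle, hUU, one_mul, hD,
    Matrix.diagonal_mul_diagonal, Matrix.trace_diagonal]
  exact Finset.sum_congr rfl fun i _ => (sq _).symm

lemma my_det_eq_prod_eig : M.det = ∏ i, hM.eigenvalues i := by
  simpa using hM.det_eq_prod_eigenvalues

end eig

lemma posdef_conj {p : ℕ} {A : Matrix (Fin p) (Fin p) ℝ} (hA : A.PosDef)
    (B : Matrix (Fin p) (Fin p) ℝ) (hB : IsUnit B) : (Bᴴ * A * B).PosDef := by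
  exact hA.conjTranspose_mul_mul_same (Matrix.mulVec_injective_iff_isUnit.mpr hB)

lemma final_ineq (c d s : ℝ) (hc : 0 ≤ c) (hd : 0 ≤ d) (hs : 0 ≤ s) (h : d ≤ c * s) :
    d^2 / (2*(c+d)^2) ≤ s^2 / (2*(1+s)^2) := by
  rcases eq_or_lt_of_le hc with hc0 | hc0
  · have hd0 : d = 0 := le_antisymm (by nlinarith) hd
    rw [hd0]
    simp
    positivity
  · have h1 : d*(1+s) ≤ s*(c+d) := by nlinarith
    have h2 : (0:ℝ) < 2*(c+d)^2 := by positivity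
    have h3 : (0:ℝ) < 2*(1+s)^2 := by positivity
    rw [div_le_div_iff₀ h2 h3]
    nlinarith [mul_nonneg hd (by linarith : (0:ℝ) ≤ 1+s), mul_nonneg hs (by linarith : (0:ℝ) ≤ c+d)]

lemma key_deriv_eq (a x : ℝ) (ha : 0 < a) (hx : x ≠ 0) :
    1 - x⁻¹ - (x-1)/a^2 = (x-1)*(x⁻¹ - (a^2)⁻¹) := by
  field_simp

lemma key_scalar (a : ℝ) (ha : 1 ≤ a) (μ : ℝ) (hμ : 0 < μ) (hμa : μ ≤ a) :
    (μ - 1)^2 / (2*a^2) ≤ μ - 1 - Real.log μ := by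
  set f : ℝ → ℝ := fun x => x - 1 - Real.log x - (x-1)^2/(2*a^2) with hf
  have ha0 : (0:ℝ) < a := lt_of_lt_of_le one_pos ha
  have hderiv : ∀ x ∈ Set.Ioi (0:ℝ), HasDerivAt f (1 - x⁻¹ - (x-1)/a^2) x := by
    intro x hx
    have hx0 : x ≠ 0 := ne_of_gt hx
    have h1 : HasDerivAt (fun x : ℝ => x - 1 - Real.log x) (1 - x⁻¹) x :=
      ((hasDerivAt_id x).sub_const 1).sub (Real.hasDerivAt_log hx0)
    have h2 : HasDerivAt (fun x : ℝ => (x-1)^2/(2*a^2)) ((x-1)/a^2) x := by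
      have h3 : HasDerivAt (fun x : ℝ => (x-1)^2) (2*(x-1)) x := by
        simpa using (((hasDerivAt_id x).sub_const 1).fun_pow 2)
      have := h3.div_const (2*a^2)
      refine this.congr_deriv ?_
      have : a^2 ≠ 0 := by positivity
      exact mul_div_mul_left _ _ two_ne_zero
    exact h1.sub h2
  have hcont : ContinuousOn f (Set.Ioi 0) :=
    fun x hx => (hderiv x hx).continuousAt.continuousWithinAt
  have hf1 : f 1 = 0 := by simp [hf]
  have key : 0 ≤ f μ := by
    rcases le_total μ 1 with h | h
    · have hsub : Set.Icc μ 1 ⊆ Set.Ioi (0:ℝ) := fun x hx => lt_of_lt_of_le hμ hx.1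
      have hanti : AntitoneOn f (Set.Icc μ 1) := by
        apply antitoneOn_of_deriv_nonpos (convex_Icc _ _) (hcont.mono hsub)
        · intro x hx
          rw [interior_Icc] at hx
          exact (hderiv x (hsub (Set.mem_Icc_of_Ioo hx))).differentiableAt.differentiableWithinAt
        · intro x hx
          rw [interior_Icc] at hx
          have hx0 : 0 < x := lt_of_lt_of_le hμ hx.1.le
          rw [(hderiv x hx0).deriv, key_deriv_eq a x ha0 (ne_of_gt hx0)]
          apply mul_nonpos_of_nonpos_of_nonneg
          · linarith [hx.2]
          · have h1 : (1:ℝ) ≤ x⁻¹ := one_le_inv_iff₀.mpr ⟨hx0, hx.2.le⟩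
            have h2 : (a^2)⁻¹ ≤ 1 := by
              rw [inv_le_one_iff₀]; right; nlinarith
            linarith
      have := hanti (Set.left_mem_Icc.mpr h) (Set.right_mem_Icc.mpr h) h
      rw [hf1] at this; exact this
    · have hsub : Set.Icc 1 μ ⊆ Set.Ioi (0:ℝ) := fun x hx => lt_of_lt_of_le one_pos hx.1
      have hmono : MonotoneOn f (Set.Icc 1 μ) := by
        apply monotoneOn_of_deriv_nonneg (convex_Icc _ _) (hcont.mono hsub)
        · intro x hx
          rw [interior_Icc] at hx
          exact (hderiv x (hsub (Set.mem_Icc_of_Ioo hx))).differentiableAt.differentiableWithinAt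
        · intro x hx
          rw [interior_Icc] at hx
          have hx0 : 0 < x := lt_of_lt_of_le one_pos hx.1.le
          rw [(hderiv x hx0).deriv, key_deriv_eq a x ha0 (ne_of_gt hx0)]
          apply mul_nonneg
          · linarith [hx.1]
          · have hxa : x ≤ a^2 := by nlinarith [hx.2]
            have h1 : (a^2)⁻¹ ≤ x⁻¹ := by
              apply inv_anti₀ hx0 hxa
            linarith
      have := hmono (Set.left_mem_Icc.mpr h) (Set.right_mem_Icc.mpr h) h
      rw [hf1] at this; exact this
  have heq : f μ = μ - 1 - Real.log μ - (μ-1)^2/(2*a^2) := rfl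
  rw [heq] at key
  linarith

/-- Restricted strong convexity of the Gaussian log-determinant loss: for `Ψ ≻ 0` with
inverse `Θ = Ψ⁻¹` and symmetric `Δ` with `Θ + Δ ≻ 0`,
`−log det(Θ+Δ) + log det Θ + tr(ΨΔ) ≥ ‖Δ‖_F² / (2(‖Θ‖₂ + ‖Δ‖_F)²)`. -/
theorem logdet_restricted_strong_convexity {p : ℕ}
    (Ψ : Matrix (Fin p) (Fin p) ℝ) (hΨ : Ψ.PosDef)
    (Δ : Matrix (Fin p) (Fin p) ℝ) (hΔ : Δ.IsSymm)
    (hpd : (Ψ⁻¹ + Δ).PosDef) :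
    frobNorm Δ ^ 2 / (2 * (specNorm Ψ⁻¹ + frobNorm Δ) ^ 2) ≤
      -Real.log (Ψ⁻¹ + Δ).det + Real.log (Ψ⁻¹).det + (Ψ * Δ).trace := by
  have hherm_eq : ∀ (A : Matrix (Fin p) (Fin p) ℝ), Aᴴ = Aᵀ := fun A => by
    ext i j; simp [Matrix.conjTranspose_apply]
  set Θ := Ψ⁻¹ with hΘdef
  have hΘ : Θ.PosDef := hΨ.inv
  have hpsd : Θ.PosSemidef := hΘ.posSemidef
  set S := CFC.sqrt Θ with hSdef
  have hSpsd : S.PosSemidef := (CFC.sqrt_nonneg Θ).posSemidef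
  have hSS : S * S = Θ := CFC.sqrt_mul_sqrt_self Θ hpsd.nonneg
  have hSherm : Sᴴ = S := hSpsd.isHermitian
  have hSt : Sᵀ = S := by rw [← hherm_eq]; exact hSherm
  have hdetΘ : 0 < Θ.det := hΘ.det_pos
  have hdS : S.det ≠ 0 := by
    intro h
    have : S.det * S.det = Θ.det := by rw [← Matrix.det_mul, hSS]
    rw [h, mul_zero] at this
    exact absurd this.symm (ne_of_gt hdetΘ)
  have hSunit : IsUnit S := (Matrix.isUnit_iff_isUnit_det S).mpr hdS.isUnit
  have hSinv : S⁻¹ * S = 1 := Matrix.nonsing_inv_mul S hdS.isUnit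
  have hSinv' : S * S⁻¹ = 1 := Matrix.mul_nonsing_inv S hdS.isUnit
  have hSinvherm : (S⁻¹)ᴴ = S⁻¹ := Matrix.IsHermitian.inv hSherm
  have hSinvunit : IsUnit (S⁻¹ : Matrix (Fin p) (Fin p) ℝ) :=
    ⟨⟨S⁻¹, S, hSinv, hSinv'⟩, rfl⟩
  set M := S⁻¹ * (Θ + Δ) * S⁻¹ with hMdef
  have hMpd : M.PosDef := by
    have := posdef_conj hpd S⁻¹ hSinvunit
    rwa [hSinvherm] at this
  have hM : M.IsHermitian := hMpd.isHermitian
  have hMt : Mᵀ = M := by rw [← hherm_eq]; exact hM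
  -- key identities
  have hSMS : S * M * S = Θ + Δ := by
    have e : S * (S⁻¹ * (Θ + Δ) * S⁻¹) * S = (S * S⁻¹) * (Θ + Δ) * (S⁻¹ * S) := by
      noncomm_ring
    rw [hMdef, e, hSinv', hSinv, one_mul, mul_one]
  have hΔeq : S * (M - 1) * S = Δ := by
    have e : S * (M - 1) * S = S * M * S - S * S := by noncomm_ring
    rw [e, hSMS, hSS]
    abel
  have hdetM : (Θ + Δ).det = Θ.det * M.det := by
    rw [← hSMS, ← hSS]
    simp only [Matrix.det_mul]
    ring
  have hdetMpos : 0 < M.det := hMpd.det_pos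
  have hlog : Real.log (Θ + Δ).det = Real.log Θ.det + Real.log M.det := by
    rw [hdetM, Real.log_mul (ne_of_gt hdetΘ) (ne_of_gt hdetMpos)]
  have hΨΘ : Θ⁻¹ = Ψ := Matrix.nonsing_inv_nonsing_inv Ψ hΨ.det_pos.ne'.isUnit
  have htr : (Ψ * Δ).trace = M.trace - p := by
    have e1 : Ψ * Δ = S⁻¹ * (M - 1) * S := by
      rw [← hΨΘ, ← hSS, Matrix.mul_inv_rev, ← hΔeq]
      calc S⁻¹ * S⁻¹ * (S * (M - 1) * S) = S⁻¹ * (S⁻¹ * S) * (M - 1) * S := by noncomm_ring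
        _ = S⁻¹ * (M - 1) * S := by rw [hSinv, mul_one]
    rw [e1, Matrix.trace_mul_cycle, hSinv', one_mul, Matrix.trace_sub,
      Matrix.trace_one]
    simp
  -- eigenvalues
  set μ := hM.eigenvalues with hμdef
  have hμpos : ∀ i, 0 < μ i := hMpd.eigenvalues_pos
  have htrM : M.trace = ∑ i, μ i := my_trace_eq_sum_eig hM
  have hdetMeq : M.det = ∏ i, μ i := my_det_eq_prod_eig hM
  have hlogdetM : Real.log M.det = ∑ i, Real.log (μ i) := by
    rw [hdetMeq, Real.log_prod (fun i _ => (hμpos i).ne')]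
  -- RHS = sum of f(μ i)
  have hRHS : -Real.log (Θ + Δ).det + Real.log Θ.det + (Ψ * Δ).trace
      = ∑ i, (μ i - 1 - Real.log (μ i)) := by
    rw [hlog, htr, hlogdetM, htrM]
    rw [Finset.sum_sub_distrib, Finset.sum_sub_distrib, Finset.sum_const,
      Finset.card_univ, Fintype.card_fin, nsmul_eq_mul, mul_one]
    ring
  -- Frobenius facts
  set s := frobNorm (M - 1) with hsdef
  have hs0 : 0 ≤ s := frobNorm_nonneg _
  have hsum_sq : ∑ i, (μ i - 1)^2 = s^2 := by
    have e1 : (M - 1)ᵀ = M - 1 := by rw [Matrix.transpose_sub, hMt, Matrix.transpose_one]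
    have e2 : s^2 = ((M-1) * (M-1)).trace := by rw [hsdef, frobNorm_sq_eq_trace, e1]
    have e3 : (M-1) * (M-1) = M * M - M - M + 1 := by noncomm_ring
    rw [e2, e3, Matrix.trace_add, Matrix.trace_sub, Matrix.trace_sub, Matrix.trace_one,
      my_trace_sq_eq_sum_eig_sq hM, htrM]
    have : ∀ i : Fin p, (μ i - 1)^2 = μ i ^2 - 2 * μ i + 1 := fun i => by ring
    rw [Finset.sum_congr rfl (fun i _ => this i), Finset.sum_add_distrib,
      Finset.sum_sub_distrib, Finset.sum_const, Finset.card_univ, Fintype.card_fin,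
      nsmul_eq_mul, mul_one, ← Finset.mul_sum]
    ring
  have hμle : ∀ i, μ i ≤ 1 + s := by
    intro i
    have h1 : (μ i - 1)^2 ≤ s^2 := by
      rw [← hsum_sq]
      exact Finset.single_le_sum (f := fun j => (μ j - 1)^2) (fun j _ => sq_nonneg _) (Finset.mem_univ i)
    nlinarith
  -- middle bound
  have hmid : s^2 / (2*(1+s)^2) ≤ ∑ i, (μ i - 1 - Real.log (μ i)) := by
    have h1 : ∀ i, (μ i - 1)^2 / (2*(1+s)^2) ≤ μ i - 1 - Real.log (μ i) := fun i =>
      key_scalar (1+s) (by linarith) (μ i) (hμpos i) (hμle i)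
    calc s^2 / (2*(1+s)^2) = ∑ i, (μ i - 1)^2 / (2*(1+s)^2) := by
          rw [← Finset.sum_div, hsum_sq]
      _ ≤ ∑ i, (μ i - 1 - Real.log (μ i)) := Finset.sum_le_sum fun i _ => h1 i
  -- left bound
  have hfrob : frobNorm Δ ≤ specNorm Θ * s := by
    rw [← hΔeq]
    have := frob_conj_le S (M-1) hSt (by rw [Matrix.transpose_sub, hMt, Matrix.transpose_one])
      (by rw [hSS]; exact hpsd)
    rwa [hSS] at this
  have hleft : frobNorm Δ ^ 2 / (2 * (specNorm Θ + frobNorm Δ) ^ 2) ≤ s^2 / (2*(1+s)^2) :=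
    final_ineq (specNorm Θ) (frobNorm Δ) s (specNorm_nonneg _) (frobNorm_nonneg _) hs0 hfrob
  rw [hRHS]
  exact le_trans hleft hmid
end
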